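/- Let p be a prime with p ≡ 1 (mod 8) and let Q̃_{p+1} be the extended binary quadratic residue code of length p+1. Then for every ℓ ∈ ℕ, whenever the shell (Q̃_{p+1})_ℓ is non-empty, it is a combinatorial 2-design: (Ω, {supp(x) : x ∈ (Q̃_{p+1})_ℓ}) is a 2-(p+1, ℓ, λ) design for some λ. The same holds for every non-empty shell of the dual code Q̃_{p+1}^⊥. -/

import Mathlib

/-- Hamming weight of a binary vector. -/
def wt {n : ℕ} (c : Fin n → ZMod 2) : ℕ :=
  (Finset.univ.filter fun i => c i ≠ 0).card

/-- Support of a binary vector, as a finset of coordinates. -/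
def suppF {n : ℕ} (c : Fin n → ZMod 2) : Finset (Fin n) :=
  Finset.univ.filter fun i => c i ≠ 0

/-- The shell `C_ℓ` of weight-`ℓ` elements of a code `C`. -/
def shell {n : ℕ} (C : Set (Fin n → ZMod 2)) (ℓ : ℕ) : Set (Fin n → ZMod 2) :=
  {c | c ∈ C ∧ wt c = ℓ}

/-- Dual code w.r.t. the standard inner product on `F₂ⁿ`. -/
def dualCode {n : ℕ} (C : Set (Fin n → ZMod 2)) : Set (Fin n → ZMod 2) :=
  {y | ∀ x ∈ C, ∑ i, x i * y i = 0}

/-- A combinatorial `t`-`(n, ℓ, lam)` design with point set `Fin n` and block collection `B`: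
all blocks have `ℓ` elements, and every `t`-element subset of the point set is contained in
exactly `lam` blocks. -/
def IsDesign (n t ℓ lam : ℕ) (B : Finset (Finset (Fin n))) : Prop :=
  (∀ b ∈ B, b.card = ℓ) ∧
    ∀ S : Finset (Fin n), S.card = t → (B.filter fun b => S ⊆ b).card = lam

/-- The block collection `B(C_ℓ) = {supp(x) : x ∈ C_ℓ}` of a shell. -/
noncomputable def shellBlocks {n : ℕ} (C : Set (Fin n → ZMod 2)) (ℓ : ℕ) :
    Finset (Finset (Fin n)) :=
  (shell C ℓ).toFinite.toFinset.image suppF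

/-- The binary quadratic residue code of length `p`: the codewords are the coefficient vectors
of the polynomials of degree `< p` over `F₂` that vanish at `α^ℓ` for every nonzero quadratic
residue `ℓ` mod `p`, where `α` is a fixed primitive `p`-th root of unity in an extension field
`K` of `F₂`; equivalently (for prime `p ≡ ±1 mod 8`), the cyclic code of length `p` with
generator polynomial `∏_{ℓ ∈ (F_p^*)²} (x - α^ℓ)`. -/
def QRCode (p : ℕ) (K : Type*) [Field K] [CharP K 2] (α : K) : Set (Fin p → ZMod 2) :=
  {c | ∀ ℓ : ZMod p, (∃ m : ZMod p, m ≠ 0 ∧ m ^ 2 = ℓ) →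
    ∑ i : Fin p, (ZMod.castHom (dvd_refl 2) K (c i)) * α ^ ((i : ℕ) * ℓ.val) = 0}

/-- The extended binary quadratic residue code of length `p + 1`, obtained from `Q_p` by
appending an overall parity-check coordinate. -/
def extQRCode (p : ℕ) (K : Type*) [Field K] [CharP K 2] (α : K) :
    Set (Fin (p + 1) → ZMod 2) :=
  {c | (fun i : Fin p => c i.castSucc) ∈ QRCode p K α ∧ ∑ i, c i = 0}

/-!
The permutations of the coordinates preserving a code also preserve its dual and permute the
supports in each shell, so when they act 2-transitively every shell is a 2-design.

Label the coordinates by the projective line `𝔽_p ∪ {∞}` (the parity coordinate being `∞`) and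
read a word as a `K`-valued function via the additive character `ψ x = α ^ x`: the word lies in
`Q̃_{p+1}` iff the Fourier transform of its finite part vanishes on the nonzero squares and the sum
of all its values vanishes. Translations `x ↦ x + b` obviously preserve this. For `x ↦ -1/x`,
Fourier inversion turns the condition into one about Kloosterman sums
`∑_{u ≠ 0} ψ (-y u - ℓ / u)` with `ℓ` a nonzero square; for `y` a non-square the involution
`u ↦ ℓ / (y u)` pairs equal terms without fixed points, so in characteristic 2 they vanish, and
only `y = 0` survives. Translations and `x ↦ -1/x` act 2-transitively on the projective line.
-/

open Finset

def permAut {X Y : Type*} (S : Set (X → Y)) : Subgroup (Equiv.Perm X) where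
  carrier := {g | ∀ f, f ∈ S ↔ f ∘ g ∈ S}
  one_mem' _ := Iff.rfl
  mul_mem' {g h} hg hh f := (hg f).trans (hh (f ∘ g))
  inv_mem' {g} hg f := by simpa [Function.comp_assoc] using (hg (f ∘ ⇑g⁻¹)).symm

section permAut

variable {X Y : Type*} {S : Set (X → Y)} {g : Equiv.Perm X}

theorem mem_permAut_of_comp_mem (h : ∀ f ∈ S, f ∘ g ∈ S) (h' : ∀ f ∈ S, f ∘ ⇑g⁻¹ ∈ S) :
    g ∈ permAut S := fun f =>
  ⟨h f, fun hf => by simpa [Function.comp_assoc] using h' _ hf⟩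

theorem permCongr_mem_permAut {X' Y' : Type*} {S' : Set (X' → Y')} (e : X ≃ X') (κ : Y' → Y)
    (hS : ∀ c, c ∈ S' ↔ κ ∘ c ∘ e ∈ S) (hg : g ∈ permAut S) : e.permCongr g ∈ permAut S' := by
  intro c
  have : κ ∘ (c ∘ e.permCongr g) ∘ e = (κ ∘ c ∘ e) ∘ g := by
    ext x
    simp [Equiv.permCongr_apply]
  rw [hS, hS, this]
  exact hg _

end permAut

section Design

variable {n : ℕ} {C : Set (Fin n → ZMod 2)}

theorem suppF_comp_perm (c : Fin n → ZMod 2) (g : Equiv.Perm (Fin n)) :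
    suppF (c ∘ g) = (suppF c).image ⇑g⁻¹ := by
  ext i
  simp only [suppF, mem_filter, mem_univ, true_and, mem_image, Function.comp_apply]
  exact ⟨fun h => ⟨g i, h, by simp⟩, by rintro ⟨a, ha, rfl⟩; simpa using ha⟩

theorem mem_shellBlocks {ℓ : ℕ} {b : Finset (Fin n)} :
    b ∈ shellBlocks C ℓ ↔ ∃ c ∈ shell C ℓ, suppF c = b := by
  simp [shellBlocks]

theorem image_mem_shellBlocks {g : Equiv.Perm (Fin n)} (hg : g ∈ permAut C) {ℓ : ℕ}
    {b : Finset (Fin n)} (hb : b ∈ shellBlocks C ℓ) : b.image g ∈ shellBlocks C ℓ := by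
  obtain ⟨c, ⟨hc, hwt⟩, rfl⟩ := mem_shellBlocks.1 hb
  have hsupp : suppF (c ∘ ⇑g⁻¹) = (suppF c).image g := by rw [suppF_comp_perm, inv_inv]
  refine mem_shellBlocks.2 ⟨c ∘ ⇑g⁻¹, ⟨(inv_mem hg c).1 hc, ?_⟩, hsupp⟩
  rw [← hwt, wt, wt, ← suppF, ← suppF, hsupp, card_image_of_injective _ g.injective]

theorem image_shellBlocks {g : Equiv.Perm (Fin n)} (hg : g ∈ permAut C) (ℓ : ℕ) :
    (shellBlocks C ℓ).image (Finset.image g) = shellBlocks C ℓ :=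
  eq_of_subset_of_card_le (image_subset_iff.2 fun _ => image_mem_shellBlocks hg)
    (card_image_of_injective _ (image_injective g.injective)).ge

theorem card_filter_image_subset_shellBlocks {g : Equiv.Perm (Fin n)} (hg : g ∈ permAut C)
    (ℓ : ℕ) (S : Finset (Fin n)) :
    #{b ∈ shellBlocks C ℓ | S.image g ⊆ b} = #{b ∈ shellBlocks C ℓ | S ⊆ b} := by
  conv_lhs => rw [← image_shellBlocks hg ℓ]
  rw [filter_image, card_image_of_injective _ (image_injective g.injective)]
  simp only [image_subset_image_iff g.injective]

theorem isDesign_shellBlocks_of_forall_image_eq (t ℓ : ℕ) (S₀ : Finset (Fin n))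
    (htrans : ∀ S : Finset (Fin n), #S = t → ∃ g ∈ permAut C, S₀.image g = S) :
    ∃ lam, IsDesign n t ℓ lam (shellBlocks C ℓ) := by
  refine ⟨#{b ∈ shellBlocks C ℓ | S₀ ⊆ b}, fun b hb => ?_, fun S hS => ?_⟩
  · obtain ⟨c, ⟨-, hwt⟩, rfl⟩ := mem_shellBlocks.1 hb
    exact hwt
  · obtain ⟨g, hg, rfl⟩ := htrans S hS
    exact card_filter_image_subset_shellBlocks hg ℓ S₀

theorem isDesign_two_shellBlocks (ℓ : ℕ) (a b : Fin n)
    (htrans : ∀ u v, u ≠ v → ∃ g ∈ permAut C, g a = u ∧ g b = v) :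
    ∃ lam, IsDesign n 2 ℓ lam (shellBlocks C ℓ) := by
  refine isDesign_shellBlocks_of_forall_image_eq 2 ℓ {a, b} fun S hS => ?_
  obtain ⟨u, v, huv, rfl⟩ := card_eq_two.1 hS
  obtain ⟨g, hg, rfl, rfl⟩ := htrans u v huv
  exact ⟨g, hg, by simp [image_insert]⟩

theorem permAut_le_permAut_dualCode : permAut C ≤ permAut (dualCode C) := by
  have hcomp : ∀ g ∈ permAut C, ∀ y ∈ dualCode C, y ∘ ⇑g ∈ dualCode C := fun g hg y hy x hx =>
    calc ∑ i, x i * (y ∘ g) i = ∑ i, (x ∘ ⇑g⁻¹) (g i) * y (g i) := by simp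
      _ = 0 := (Equiv.sum_comp g fun i => (x ∘ ⇑g⁻¹) i * y i).trans (hy _ ((inv_mem hg x).1 hx))
  exact fun g hg => mem_permAut_of_comp_mem (hcomp g hg) (hcomp _ (inv_mem hg))

end Design

theorem Fintype.sum_eq_add_sum_units {G₀ M : Type*} [GroupWithZero G₀] [Fintype G₀]
    [DecidableEq G₀] [AddCommMonoid M] (h : G₀ → M) : ∑ x, h x = h 0 + ∑ u : G₀ˣ, h u := by
  rw [← add_sum_erase _ _ (mem_univ 0)]
  congr 1
  refine sum_bij' (fun x hx => Units.mk0 x (ne_of_mem_erase hx)) (fun u _ => u)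
    (fun _ _ => mem_univ _) (fun u _ => mem_erase.2 ⟨u.ne_zero, mem_univ _⟩)
    (fun _ _ => rfl) (fun _ _ => Units.ext rfl) (fun _ _ => rfl)

namespace AddChar

variable {R K : Type*} [CommRing R] [Fintype R] [CommRing K]

def dft (ψ : AddChar R K) (a : R → K) (y : R) : K := ∑ x, a x * ψ (x * y)

theorem dft_comp_add_right (ψ : AddChar R K) (a : R → K) (b y : R) :
    dft ψ (fun x => a (x + b)) y = ψ (-(b * y)) * dft ψ a y := by
  rw [dft, dft, mul_sum]
  refine Fintype.sum_equiv (Equiv.addRight b) _ _ fun x => ?_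
  rw [Equiv.coe_addRight, mul_left_comm, ← map_add_eq_mul]
  congr 2
  ring

theorem sum_dft_mul_neg [DecidableEq R] [IsDomain K] {ψ : AddChar R K} (hψ : ψ.IsPrimitive)
    (a : R → K) (j : R) :
    ∑ y, dft ψ a y * ψ (-(j * y)) = Fintype.card R * a j := by
  have hsum : ∀ x, ∑ y, ψ (x * y) * ψ (-(j * y)) = ∑ y, ψ (y * (x - j)) :=
    fun x => sum_congr rfl fun y _ => by rw [← map_add_eq_mul]; ring_nf
  simp_rw [dft, sum_mul, mul_assoc]
  rw [sum_comm]
  simp_rw [← mul_sum, hsum, sum_mulShift _ hψ, sub_eq_zero]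
  simp [mul_comm]

theorem sum_units_apply_mul_inv {F K : Type*} [Field F] [Fintype F] [DecidableEq F]
    [CommRing K] [IsDomain K] {ψ : AddChar F K} (hψ : ψ ≠ 1) {c : F} (hc : c ≠ 0) :
    ∑ u : Fˣ, ψ (c * u⁻¹) = -1 := by
  have hsum := Fintype.sum_eq_add_sum_units ψ
  rw [sum_eq_zero_of_ne_one hψ, map_zero_eq_one] at hsum
  rw [← eq_neg_of_add_eq_zero_right hsum.symm]
  exact Fintype.sum_equiv ((Equiv.inv _).trans (Equiv.mulLeft (Units.mk0 c hc))) _ _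
    fun u => by simp

end AddChar

section CharTwo

variable {F K : Type*} [Field F] [Fintype F] [DecidableEq F] [CommRing K] [CharP K 2]

theorem sum_units_add_inv_eq_zero (g : F → K) {u v : F} (hu : u ≠ 0)
    (hv : ∀ j, u * j ^ 2 ≠ v) : ∑ j : Fˣ, g (u * j + v * j⁻¹) = 0 := by
  have hv0 : v ≠ 0 := fun h => hv 0 (by simp [h])
  let w : Fˣ := Units.mk0 (v / u) (div_ne_zero hv0 hu)
  refine sum_involution (fun j _ => w * j⁻¹) (fun j _ => ?_) (fun j _ _ hj => ?_)
    (fun _ _ => mem_univ _) (fun j _ => by simp)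
  · have : u * ↑(w * j⁻¹) + v * ↑(w * j⁻¹)⁻¹ = u * j + v * ↑j⁻¹ := by
      simp only [w, Units.val_mul, Units.val_mk0, Units.val_inv_eq_inv_val]
      field_simp
      ring
    rw [this, CharTwo.add_self_eq_zero]
  · refine hv j ?_
    have := congrArg (fun x : Fˣ => (x : F)) hj
    simp only [w, Units.val_mul, Units.val_mk0, Units.val_inv_eq_inv_val] at this
    field_simp at this
    exact this.symm

end CharTwo

namespace ProjectiveLine

open AddChar

variable {F : Type*} [Field F]

def translate (b : F) : Equiv.Perm (Option F) := Equiv.optionCongr (Equiv.addRight b)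

@[simp] theorem translate_none (b : F) : translate b none = none := rfl

@[simp] theorem translate_some (b x : F) : translate b (some x) = some (x + b) := rfl

theorem translate_inv (b : F) : (translate b)⁻¹ = translate (-b) :=
  inv_eq_of_mul_eq_one_right <| Equiv.ext fun o => by cases o <;> simp

section

variable [Fintype F] {K : Type*} [Field K]

def extQRLine (ψ : AddChar F K) : Set (Option F → K) :=
  {f | (∀ m : Fˣ, dft ψ (f ∘ some) ((m : F) ^ 2) = 0) ∧ ∑ o, f o = 0}

theorem comp_translate_mem_extQRLine {ψ : AddChar F K} {f : Option F → K}
    (hf : f ∈ extQRLine ψ) (b : F) : f ∘ translate b ∈ extQRLine ψ := by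
  refine ⟨fun m => ?_, (Equiv.sum_comp _ f).trans hf.2⟩
  rw [show (f ∘ translate b) ∘ some = fun x => (f ∘ some) (x + b) from rfl,
    dft_comp_add_right, hf.1 m, mul_zero]

theorem translate_mem_permAut_extQRLine (ψ : AddChar F K) (b : F) :
    translate b ∈ permAut (extQRLine ψ) :=
  mem_permAut_of_comp_mem (fun _ hf => comp_translate_mem_extQRLine hf b)
    fun _ hf => translate_inv b ▸ comp_translate_mem_extQRLine hf (-b)

end

variable [DecidableEq F]

def negInvFun (o : Option F) : Option F :=
  o.elim (some 0) fun x => if x = 0 then none else some (-x⁻¹)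

theorem negInvFun_involutive : Function.Involutive (negInvFun (F := F)) := by
  rintro (_ | x)
  · simp [negInvFun]
  · by_cases hx : x = 0 <;> simp [negInvFun, hx]

def negInv : Equiv.Perm (Option F) := negInvFun_involutive.toPerm _

theorem negInv_inv : (negInv : Equiv.Perm (Option F))⁻¹ = negInv :=
  Function.Involutive.toPerm_symm _

@[simp] theorem negInv_none : negInv none = some (0 : F) := rfl

@[simp] theorem negInv_some_zero : negInv (some (0 : F)) = none := by simp [negInv, negInvFun]

theorem negInv_some {x : F} (hx : x ≠ 0) : negInv (some x) = some (-x⁻¹) := by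
  simp [negInv, negInvFun, hx]

theorem exists_mem_apply_none_apply_zero (G : Subgroup (Equiv.Perm (Option F)))
    (htranslate : ∀ b, translate b ∈ G) (hnegInv : negInv ∈ G) {u v : Option F} (huv : u ≠ v) :
    ∃ g ∈ G, g none = u ∧ g (some 0) = v := by
  rcases u with _ | x <;> rcases v with _ | y
  · exact absurd rfl huv
  · exact ⟨translate y, htranslate y, rfl, by simp⟩
  · exact ⟨translate x * negInv, mul_mem (htranslate x) hnegInv, by simp, by simp⟩
  · have hxy : x - y ≠ 0 := sub_ne_zero.2 fun h => huv (congrArg some h)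
    refine ⟨translate x * negInv * translate (x - y)⁻¹,
      mul_mem (mul_mem (htranslate x) hnegInv) (htranslate _), by simp, ?_⟩
    simp [negInv_some (inv_ne_zero hxy)]

section

variable [Fintype F] {K : Type*} [Field K] [CharP K 2] {ψ : AddChar F K}

theorem sum_units_mul_neg_inv_eq_dft_zero (hψ : ψ.IsPrimitive) (hq : (Fintype.card F : K) = 1)
    {a : F → K} (ha : ∀ m : Fˣ, dft ψ a ((m : F) ^ 2) = 0) (m : Fˣ) :
    ∑ u : Fˣ, a (-(u : F)⁻¹) * ψ (u * (m : F) ^ 2) = dft ψ a 0 := by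
  set ℓ : F := (m : F) ^ 2
  have hℓ0 : ℓ ≠ 0 := pow_ne_zero 2 m.ne_zero
  have hreindex : ∑ u : Fˣ, a (-(u : F)⁻¹) * ψ (u * ℓ) = ∑ u : Fˣ, a u * ψ (-ℓ * u⁻¹) :=
    Fintype.sum_equiv ((Equiv.inv Fˣ).trans (Equiv.neg Fˣ)) _ _ fun u => by simp [mul_comm]
  have hexpand : ∑ u : Fˣ, a u * ψ (-ℓ * u⁻¹) =
      ∑ y, dft ψ a y * ∑ u : Fˣ, ψ (-y * u + -ℓ * u⁻¹) := by
    have hinv (u : F) : a u = ∑ y, dft ψ a y * ψ (-(u * y)) := by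
      rw [sum_dft_mul_neg hψ, hq, one_mul]
    conv_lhs => enter [2, u]; rw [hinv u, sum_mul]
    rw [sum_comm]
    refine sum_congr rfl fun y _ => ?_
    rw [mul_sum]
    refine sum_congr rfl fun u _ => ?_
    rw [mul_assoc, ← map_add_eq_mul]
    ring_nf
  rw [hreindex, hexpand, sum_eq_single 0 (fun y _ hy0 => ?_) (by simp)]
  · simp only [neg_zero, zero_mul, zero_add]
    rw [sum_units_apply_mul_inv (by simpa using hψ one_ne_zero) (neg_ne_zero.2 hℓ0),
      CharTwo.neg_eq, mul_one]
  by_cases hy : ∃ n : Fˣ, (n : F) ^ 2 = y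
  · obtain ⟨n, rfl⟩ := hy
    rw [ha n, zero_mul]
  · refine mul_eq_zero_of_right _ (sum_units_add_inv_eq_zero ψ (neg_ne_zero.2 hy0) fun j hj => ?_)
    have hj0 : j ≠ 0 := by rintro rfl; simp [hℓ0] at hj
    refine hy ⟨Units.mk0 (m / j) (div_ne_zero m.ne_zero hj0), ?_⟩
    simp only [Units.val_mk0, div_pow]
    field_simp
    linear_combination hj

theorem comp_negInv_mem_extQRLine (hψ : ψ.IsPrimitive) (hq : (Fintype.card F : K) = 1)
    {f : Option F → K} (hf : f ∈ extQRLine ψ) : f ∘ negInv ∈ extQRLine ψ := by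
  refine ⟨fun m => ?_, (Equiv.sum_comp _ f).trans hf.2⟩
  have hinfty : f none = dft ψ (f ∘ some) 0 := by
    have := hf.2
    rw [Fintype.sum_option, CharTwo.add_eq_zero] at this
    simpa [dft] using this
  have hsum := sum_units_mul_neg_inv_eq_dft_zero hψ hq hf.1 m
  have hneg (u : Fˣ) : negInv (some (u : F)) = some (-(u : F)⁻¹) := negInv_some u.ne_zero
  rw [dft, Fintype.sum_eq_add_sum_units]
  simp only [Function.comp_apply, negInv_some_zero, zero_mul, map_zero_eq_one, mul_one,
    hneg] at hsum ⊢
  rw [hsum, ← hinfty, CharTwo.add_self_eq_zero]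

theorem negInv_mem_permAut_extQRLine (hψ : ψ.IsPrimitive) (hq : (Fintype.card F : K) = 1) :
    negInv ∈ permAut (extQRLine ψ) :=
  mem_permAut_of_comp_mem (fun _ => comp_negInv_mem_extQRLine hψ hq)
    fun _ => negInv_inv (F := F) ▸ comp_negInv_mem_extQRLine hψ hq

end

end ProjectiveLine

theorem ZMod.finEquiv_apply {n : ℕ} [NeZero n] (i : Fin n) : ZMod.finEquiv n i = (i : ℕ) := by
  obtain ⟨k, rfl⟩ : ∃ k, n = k + 1 := Nat.exists_eq_succ_of_ne_zero (NeZero.ne n)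
  exact (Fin.cast_val_eq_self i).symm

section CoordEquiv

variable {p : ℕ} [NeZero p]

def coordEquiv (p : ℕ) [NeZero p] : Fin (p + 1) ≃ Option (ZMod p) :=
  finSuccEquivLast.trans (Equiv.optionCongr (ZMod.finEquiv p).toEquiv)

@[simp] theorem coordEquiv_last : coordEquiv p (Fin.last p) = none := by simp [coordEquiv]

@[simp] theorem coordEquiv_zero : coordEquiv p 0 = some 0 := by
  rw [← Fin.castSucc_zero', coordEquiv, Equiv.trans_apply, finSuccEquivLast_castSucc]
  simp

theorem coordEquiv_symm_some (i : Fin p) :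
    (coordEquiv p).symm (some (ZMod.finEquiv p i)) = i.castSucc := by
  simp [coordEquiv, ← Equiv.optionCongr_symm]

end CoordEquiv

section ExtQRCode

open ProjectiveLine AddChar

variable {p : ℕ} [Fact p.Prime] {K : Type*} [Field K] [CharP K 2] {α : K}

theorem mem_extQRCode_iff (hα : α ^ p = 1) (c : Fin (p + 1) → ZMod 2) :
    c ∈ extQRCode p K α ↔
      ZMod.castHom (dvd_refl 2) K ∘ c ∘ (coordEquiv p).symm ∈ extQRLine (zmodChar p hα) := by
  set κ := ZMod.castHom (dvd_refl 2) K
  have hdft (ℓ : ZMod p) : ∑ i : Fin p, κ (c i.castSucc) * α ^ ((i : ℕ) * ℓ.val) =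
      dft (zmodChar p hα) ((κ ∘ c ∘ (coordEquiv p).symm) ∘ some) ℓ := by
    rw [dft, ← (ZMod.finEquiv p).toEquiv.sum_comp]
    refine sum_congr rfl fun i _ => ?_
    have hcast : ZMod.finEquiv p i * ℓ = ((i * ℓ.val : ℕ) : ZMod p) := by
      rw [ZMod.finEquiv_apply]
      push_cast [ZMod.natCast_zmod_val]
      rfl
    simp only [RingEquiv.toEquiv_eq_coe, EquivLike.coe_coe, Function.comp_apply,
      coordEquiv_symm_some, hcast, zmodChar_apply']
  have hparity : ∑ o, (κ ∘ c ∘ (coordEquiv p).symm) o = κ (∑ i, c i) := by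
    rw [map_sum]
    exact Equiv.sum_comp (coordEquiv p).symm (κ ∘ c)
  refine and_congr ⟨fun h m => ?_, fun h ℓ ⟨m, hm, hℓ⟩ => ?_⟩ ?_
  · exact (hdft _).symm.trans (h _ ⟨m, m.ne_zero, rfl⟩)
  · subst hℓ
    exact (hdft _).trans (h (Units.mk0 m hm))
  · rw [hparity, map_eq_zero_iff κ κ.injective]

theorem extQRCode_two_transitive (hα : orderOf α = p) {u v : Fin (p + 1)}
    (huv : u ≠ v) : ∃ g ∈ permAut (extQRCode p K α), g (Fin.last p) = u ∧ g 0 = v := by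
  have hprim : IsPrimitiveRoot α p := IsPrimitiveRoot.iff_orderOf.2 hα
  have hcard : (Fintype.card (ZMod p) : K) = 1 := by
    have := hprim.neZero'
    rw [ZMod.card]
    exact (CharTwo.natCast_cases K p).resolve_left (NeZero.ne _)
  have hψ := zmodChar_primitive_of_primitive_root p hprim
  obtain ⟨g, hg, hgu, hgv⟩ := exists_mem_apply_none_apply_zero _
    (translate_mem_permAut_extQRLine _) (negInv_mem_permAut_extQRLine hψ hcard)
    ((coordEquiv p).injective.ne huv)
  refine ⟨(coordEquiv p).symm.permCongr g,
    permCongr_mem_permAut _ _ (mem_extQRCode_iff _) hg, ?_, ?_⟩ <;>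
  simp [Equiv.permCongr_apply, hgu, hgv]

end ExtQRCode

theorem extQR_shells_two_design_general (p : ℕ) (hp : p.Prime)
    (K : Type*) [Field K] [CharP K 2] (α : K) (hα : orderOf α = p) :
    (∀ ℓ : ℕ, (shell (extQRCode p K α) ℓ).Nonempty →
      ∃ lam : ℕ, IsDesign (p + 1) 2 ℓ lam (shellBlocks (extQRCode p K α) ℓ)) ∧
    (∀ ℓ : ℕ, (shell (dualCode (extQRCode p K α)) ℓ).Nonempty →
      ∃ lam : ℕ, IsDesign (p + 1) 2 ℓ lam (shellBlocks (dualCode (extQRCode p K α)) ℓ)) := by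
  have : Fact p.Prime := ⟨hp⟩
  have htrans (u v : Fin (p + 1)) (huv : u ≠ v) :
      ∃ g ∈ permAut (extQRCode p K α), g (Fin.last p) = u ∧ g 0 = v :=
    extQRCode_two_transitive hα huv
  refine ⟨fun ℓ _ => isDesign_two_shellBlocks ℓ _ _ htrans,
    fun ℓ _ => isDesign_two_shellBlocks ℓ (Fin.last p) 0 fun u v huv => ?_⟩
  obtain ⟨g, hg, hgu⟩ := htrans u v huv
  exact ⟨g, permAut_le_permAut_dualCode hg, hgu⟩

/-- For a prime `p ≡ 1 (mod 8)`, every non-empty shell of the extended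
binary quadratic residue code `Q̃_{p+1}` is a combinatorial `2`-design, and the same holds
for every non-empty shell of its dual code. -/
theorem extQR_shells_two_design (p : ℕ) (hp : p.Prime) (h8 : p % 8 = 1)
    (K : Type*) [Field K] [CharP K 2] (α : K) (hα : orderOf α = p) :
    (∀ ℓ : ℕ, (shell (extQRCode p K α) ℓ).Nonempty →
      ∃ lam : ℕ, IsDesign (p + 1) 2 ℓ lam (shellBlocks (extQRCode p K α) ℓ)) ∧
    (∀ ℓ : ℕ, (shell (dualCode (extQRCode p K α)) ℓ).Nonempty →
      ∃ lam : ℕ, IsDesign (p + 1) 2 ℓ lam (shellBlocks (dualCode (extQRCode p K α)) ℓ)) :=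
  extQR_shells_two_design_general p hp K α hα
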